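/- Fix constants 0 < α₀ < β₀ < 1 and γ > 0, and reals α, β with 0 ≤ α < β ≤ 1, α ≤ β₀ and β ≥ α₀. Let (E_n)_{n∈ℕ} be i.i.d. random variables, each exponentially distributed with mean 1, and define X^{(N)}_n and X̄_N as follows: X^{(N)}_n = (1+γ)·E_n if ⌊α₀N⌋ ≤ n < ⌊β₀N⌋ and X^{(N)}_n = E_n otherwise, and X̄_N = (1/(⌊βN⌋−⌊αN⌋)) Σ_{n=⌊αN⌋}^{⌊βN⌋−1} X^{(N)}_n (for N large enough that ⌊αN⌋ < ⌊βN⌋). Set G_N(α,β) = ((⌊βN⌋−⌊αN⌋)/N)·( m_N − 1 − log m_N ) with m_N = max(X̄_N, 1). Then G_N(α,β) converges almost surely to G(α,β) = (β−α)·( Z(α,β) − 1 − log Z(α,β) ) as N → ∞, where Z(α,β) = 1 + γ·(min(β₀,β) − max(α₀,α))/(β − α). -/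

import Mathlib

/-!
Write `S n = E₀ + ⋯ + E_{n-1}`. By the strong law of large numbers `S n / n → 1` almost surely,
hence `S ⌊cN⌋₊ / N → c` for every `c ≥ 0`. The tilted window sum is the plain sum over
`[⌊αN⌋, ⌊βN⌋)` plus `γ` times the sum over its overlap `[⌊max α₀ α · N⌋, ⌊min β₀ β · N⌋)` with the
change segment, so the window mean tends to `Z(α, β) ≥ 1`, where `x ↦ x - 1 - log x` is continuous.
-/

open Finset Real MeasureTheory Filter ProbabilityTheory
open scoped Topology

theorem integral_id_expMeasure {r : ℝ} (hr : 0 < r) : ∫ x, x ∂expMeasure r = r⁻¹ := by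
  have hmeas : Measurable (gammaPDF 1 r) := (measurable_gammaPDFReal 1 r).ennreal_ofReal
  have hvanish : ∀ x ∉ Set.Ioi (0 : ℝ), (gammaPDF 1 r x).toReal • x = 0 := by
    intro x hx
    rcases (Set.notMem_Ioi.mp hx).lt_or_eq with hneg | rfl
    · simp [gammaPDF_of_neg hneg]
    · simp
  have hpos : ∀ x ∈ Set.Ioi (0 : ℝ),
      (gammaPDF 1 r x).toReal • x = r * (x ^ ((2 : ℝ) - 1) * exp (-(r * x))) := by
    intro x (hx : 0 < x)
    rw [gammaPDF_of_nonneg hx.le, ENNReal.toReal_ofReal (by positivity)]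
    norm_num
    ring
  rw [expMeasure, gammaMeasure, integral_withDensity_eq_integral_toReal_smul hmeas,
    ← setIntegral_eq_integral_of_forall_compl_eq_zero hvanish,
    setIntegral_congr_fun measurableSet_Ioi hpos, integral_const_mul,
    integral_rpow_mul_exp_neg_mul_Ioi two_pos hr, Gamma_two, rpow_two]
  · field_simp
  · exact ae_of_all _ fun _ => ENNReal.ofReal_lt_top

theorem integrable_id_expMeasure {r : ℝ} (hr : 0 < r) : Integrable id (expMeasure r) :=
  Integrable.of_integral_ne_zero ((integral_id_expMeasure hr).trans_ne (inv_ne_zero hr.ne'))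

theorem ae_tendsto_average_of_iIndepFun {Ω : Type*} [MeasurableSpace Ω] {P : Measure Ω}
    {μ : Measure ℝ} [NeZero μ] {E : ℕ → Ω → ℝ} (hindep : iIndepFun E P)
    (hdist : ∀ n, P.map (E n) = μ) (hμ : Integrable id μ) :
    ∀ᵐ ω ∂P, Tendsto (fun n : ℕ => (∑ i ∈ range n, E i ω) / n) atTop (𝓝 (∫ x, x ∂μ)) := by
  have hmeas : ∀ n, AEMeasurable (E n) P := fun n =>
    .of_map_ne_zero (by rw [hdist n]; exact NeZero.ne μ)
  have hint : Integrable (E 0) P := by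
    rw [← hdist 0] at hμ
    exact (integrable_map_measure aestronglyMeasurable_id (hmeas 0)).mp hμ
  have hmean : ∫ ω, E 0 ω ∂P = ∫ x, x ∂μ := by
    rw [← hdist 0, integral_map (f := fun x => x) (hmeas 0) aestronglyMeasurable_id]
  rw [← hmean]
  exact strong_law_ae_real E hint (fun i j hij => hindep.indepFun hij)
    (fun i => ⟨hmeas i, hmeas 0, by rw [hdist i, hdist 0]⟩)

theorem tendsto_floor_mul_div_of_tendsto_div {S : ℕ → ℝ} {m : ℝ}
    (hS : Tendsto (fun n : ℕ => S n / n) atTop (𝓝 m)) {c : ℝ} (hc : 0 ≤ c) :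
    Tendsto (fun N : ℕ => S ⌊c * N⌋₊ / N) atTop (𝓝 (c * m)) := by
  rcases hc.eq_or_lt with rfl | hc
  · simpa using tendsto_const_div_atTop_nhds_zero_nat (S 0)
  have hfloor : Tendsto (fun N : ℕ => ⌊c * N⌋₊) atTop atTop :=
    tendsto_nat_floor_mul_atTop c hc
  have hratio : Tendsto (fun N : ℕ => (⌊c * N⌋₊ : ℝ) / N) atTop (𝓝 c) :=
    (tendsto_nat_floor_mul_div_atTop hc.le).comp tendsto_natCast_atTop_atTop
  rw [mul_comm]
  refine ((hS.comp hfloor).mul hratio).congr' ?_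
  filter_upwards [hfloor.eventually_ne_atTop 0] with N hN
  exact div_mul_div_cancel₀ (Nat.cast_ne_zero.mpr hN)

theorem tendsto_sum_Ico_floor_mul_div {e : ℕ → ℝ} {m : ℝ}
    (he : Tendsto (fun n : ℕ => (∑ i ∈ range n, e i) / n) atTop (𝓝 m)) {a b : ℝ}
    (ha : 0 ≤ a) (hab : a ≤ b) :
    Tendsto (fun N : ℕ => (∑ i ∈ Ico ⌊a * N⌋₊ ⌊b * N⌋₊, e i) / N) atTop (𝓝 ((b - a) * m)) := by
  rw [sub_mul]
  refine ((tendsto_floor_mul_div_of_tendsto_div he (ha.trans hab)).sub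
    (tendsto_floor_mul_div_of_tendsto_div he ha)).congr fun N => ?_
  rw [sum_Ico_eq_sub _ (Nat.floor_mono (by gcongr)), sub_div]

theorem tendsto_floor_mul_sub_floor_mul_div {a b : ℝ} (ha : 0 ≤ a) (hab : a ≤ b) :
    Tendsto (fun N : ℕ => ((⌊b * N⌋₊ - ⌊a * N⌋₊ : ℕ) : ℝ) / N) atTop (𝓝 (b - a)) := by
  refine (((tendsto_nat_floor_mul_div_atTop (ha.trans hab)).sub
    (tendsto_nat_floor_mul_div_atTop ha)).comp tendsto_natCast_atTop_atTop).congr fun N => ?_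
  rw [Function.comp_apply, Nat.cast_sub (Nat.floor_mono (by gcongr)), sub_div]

theorem sum_Ico_ite_one_add_mul {R : Type*} [Semiring R] (e : ℕ → R) (γ : R)
    (a b a₀ b₀ : ℕ) :
    ∑ n ∈ Ico a b, (if a₀ ≤ n ∧ n < b₀ then (1 + γ) * e n else e n) =
      ∑ n ∈ Ico a b, e n + γ * ∑ n ∈ Ico (max a a₀) (min b b₀), e n := by
  have hsplit : ∀ n, (if a₀ ≤ n ∧ n < b₀ then (1 + γ) * e n else e n) =
      e n + γ * if n ∈ Ico a₀ b₀ then e n else 0 := by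
    intro n
    by_cases h : a₀ ≤ n ∧ n < b₀ <;> simp [h, add_mul]
  simp only [hsplit, sum_add_distrib, ← mul_sum, sum_ite_mem, Ico_inter_Ico]

section FloorMaxMin

variable {K : Type*} [Field K] [LinearOrder K] [IsStrictOrderedRing K] [FloorSemiring K]

theorem Nat.floor_max_mul {a b x : K} (hx : 0 ≤ x) :
    ⌊max a b * x⌋₊ = max ⌊a * x⌋₊ ⌊b * x⌋₊ := by
  rw [max_mul_of_nonneg _ _ hx, Nat.floor_mono.map_max]

theorem Nat.floor_min_mul {a b x : K} (hx : 0 ≤ x) :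
    ⌊min a b * x⌋₊ = min ⌊a * x⌋₊ ⌊b * x⌋₊ := by
  rw [min_mul_of_nonneg _ _ hx, Nat.floor_mono.map_min]

end FloorMaxMin

theorem tendsto_tilted_window_mean {e : ℕ → ℝ} {m : ℝ}
    (he : Tendsto (fun n : ℕ => (∑ i ∈ range n, e i) / n) atTop (𝓝 m)) {α₀ β₀ γ α β : ℝ}
    (hα : 0 ≤ α) (hαβ : α < β) (hoverlap : max α₀ α ≤ min β₀ β) :
    Tendsto (fun N : ℕ =>
      (∑ n ∈ Ico ⌊α * N⌋₊ ⌊β * N⌋₊,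
        (if ⌊α₀ * N⌋₊ ≤ n ∧ n < ⌊β₀ * N⌋₊ then (1 + γ) * e n else e n)) /
        ((⌊β * N⌋₊ - ⌊α * N⌋₊ : ℕ) : ℝ))
      atTop (𝓝 ((1 + γ * (min β₀ β - max α₀ α) / (β - α)) * m)) := by
  have hnum : Tendsto (fun N : ℕ =>
      (∑ n ∈ Ico ⌊α * N⌋₊ ⌊β * N⌋₊,
        (if ⌊α₀ * N⌋₊ ≤ n ∧ n < ⌊β₀ * N⌋₊ then (1 + γ) * e n else e n)) / N)
      atTop (𝓝 ((β - α) * m + γ * ((min β₀ β - max α₀ α) * m))) := by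
    have hoverlap_sum := tendsto_sum_Ico_floor_mul_div he (hα.trans (le_max_right _ _)) hoverlap
    refine ((tendsto_sum_Ico_floor_mul_div he hα hαβ.le).add
      (hoverlap_sum.const_mul γ)).congr fun N => ?_
    rw [sum_Ico_ite_one_add_mul, Nat.floor_max_mul N.cast_nonneg,
      Nat.floor_min_mul N.cast_nonneg, max_comm ⌊α₀ * N⌋₊, min_comm ⌊β₀ * N⌋₊, add_div,
      mul_div_assoc]
  have hβα : β - α ≠ 0 := sub_ne_zero.mpr hαβ.ne'
  refine (hnum.div (tendsto_floor_mul_sub_floor_mul_div hα hαβ.le) hβα).congr' ?_ |>.trans_eq ?_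
  · filter_upwards [eventually_ne_atTop 0] with N hN
    exact div_div_div_cancel_right₀ (Nat.cast_ne_zero.mpr hN) _ _
  · field_simp

theorem normalized_likelihood_limit_general
    {Ω : Type*} [MeasurableSpace Ω] (P : Measure Ω)
    (α₀ β₀ γ : ℝ) (h1 : α₀ < β₀) (hγ : 0 < γ)
    (α β : ℝ) (hα : 0 ≤ α) (hαβ : α < β)
    (hαβ₀ : α ≤ β₀) (hβα₀ : α₀ ≤ β)
    (E : ℕ → Ω → ℝ)
    (hindep : ProbabilityTheory.iIndepFun E P)
    (hdist : ∀ n, Measure.map (E n) P = ProbabilityTheory.expMeasure 1) :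
    ∀ᵐ ω ∂P, Filter.Tendsto
      (fun N : ℕ =>
        (((⌊β * N⌋₊ - ⌊α * N⌋₊ : ℕ) : ℝ) / (N : ℝ)) *
          (max ((∑ n ∈ Finset.Ico ⌊α * N⌋₊ ⌊β * N⌋₊,
              (if ⌊α₀ * N⌋₊ ≤ n ∧ n < ⌊β₀ * N⌋₊ then (1 + γ) * E n ω else E n ω)) /
              ((⌊β * N⌋₊ - ⌊α * N⌋₊ : ℕ) : ℝ)) 1 - 1 -
            Real.log (max ((∑ n ∈ Finset.Ico ⌊α * N⌋₊ ⌊β * N⌋₊,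
              (if ⌊α₀ * N⌋₊ ≤ n ∧ n < ⌊β₀ * N⌋₊ then (1 + γ) * E n ω else E n ω)) /
              ((⌊β * N⌋₊ - ⌊α * N⌋₊ : ℕ) : ℝ)) 1)))
      Filter.atTop
      (nhds ((β - α) *
        ((1 + γ * (min β₀ β - max α₀ α) / (β - α)) - 1 -
          Real.log (1 + γ * (min β₀ β - max α₀ α) / (β - α))))) := by
  have hoverlap : max α₀ α ≤ min β₀ β := max_le (le_min h1.le hβα₀) (le_min hαβ₀ hαβ.le)
  have hZ : 1 ≤ 1 + γ * (min β₀ β - max α₀ α) / (β - α) :=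
    le_add_of_nonneg_right <|
      div_nonneg (mul_nonneg hγ.le (sub_nonneg.mpr hoverlap)) (sub_pos.mpr hαβ).le
  have := isProbabilityMeasure_expMeasure one_pos
  filter_upwards [ae_tendsto_average_of_iIndepFun hindep hdist
    (integrable_id_expMeasure one_pos)] with ω hω
  rw [integral_id_expMeasure one_pos, inv_one] at hω
  have hmax := (tendsto_tilted_window_mean hω hα hαβ hoverlap (γ := γ)).max
    (tendsto_const_nhds (x := (1 : ℝ)))
  rw [mul_one, max_eq_left hZ] at hmax
  exact (tendsto_floor_mul_sub_floor_mul_div hα hαβ.le).mul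
    ((hmax.sub_const 1).sub (hmax.log (zero_lt_one.trans_le hZ).ne'))

/-- Almost-sure convergence of the normalized maximized log-likelihood:
`G_N(α,β) = ((⌊βN⌋−⌊αN⌋)/N)·(m_N − 1 − log m_N)` with `m_N = max(X̄_N, 1)` converges
almost surely to `G(α,β) = (β−α)·(Z(α,β) − 1 − log Z(α,β))`. -/
theorem normalized_likelihood_limit
    {Ω : Type*} [MeasurableSpace Ω] (P : Measure Ω) [IsProbabilityMeasure P]
    (α₀ β₀ γ : ℝ) (h0 : 0 < α₀) (h1 : α₀ < β₀) (h2 : β₀ < 1) (hγ : 0 < γ)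
    (α β : ℝ) (hα : 0 ≤ α) (hαβ : α < β) (hβ : β ≤ 1)
    (hαβ₀ : α ≤ β₀) (hβα₀ : α₀ ≤ β)
    (E : ℕ → Ω → ℝ)
    (hmeas : ∀ n, Measurable (E n))
    (hindep : ProbabilityTheory.iIndepFun E P)
    (hdist : ∀ n, Measure.map (E n) P = ProbabilityTheory.expMeasure 1) :
    ∀ᵐ ω ∂P, Filter.Tendsto
      (fun N : ℕ =>
        (((⌊β * N⌋₊ - ⌊α * N⌋₊ : ℕ) : ℝ) / (N : ℝ)) *
          (max ((∑ n ∈ Finset.Ico ⌊α * N⌋₊ ⌊β * N⌋₊,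
              (if ⌊α₀ * N⌋₊ ≤ n ∧ n < ⌊β₀ * N⌋₊ then (1 + γ) * E n ω else E n ω)) /
              ((⌊β * N⌋₊ - ⌊α * N⌋₊ : ℕ) : ℝ)) 1 - 1 -
            Real.log (max ((∑ n ∈ Finset.Ico ⌊α * N⌋₊ ⌊β * N⌋₊,
              (if ⌊α₀ * N⌋₊ ≤ n ∧ n < ⌊β₀ * N⌋₊ then (1 + γ) * E n ω else E n ω)) /
              ((⌊β * N⌋₊ - ⌊α * N⌋₊ : ℕ) : ℝ)) 1)))
      Filter.atTop
      (nhds ((β - α) *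
        ((1 + γ * (min β₀ β - max α₀ α) / (β - α)) - 1 -
          Real.log (1 + γ * (min β₀ β - max α₀ α) / (β - α))))) :=
  normalized_likelihood_limit_general P α₀ β₀ γ h1 hγ α β hα hαβ hαβ₀ hβα₀ E hindep hdist
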